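/- The map g : ℝ₊ × ℝ × (-1,1) × ℝ → ℝ⁴, written in coordinates (r,θ) polar on the first ℝ²-factor and (x,y) Cartesian on the second, given by g(θ, z, p_θ, p_z) = (r, Θ, x, y) = (1 + p_θ, -θ/(1+p_θ), z, p_z), pulls back the symplectic form -r dr∧dΘ + dy∧dx to dp_θ∧dθ + dp_z∧dz. -/

import Mathlib

/-!
The map factors as `(θ, z, p_θ, p_z) ↦ (r, Θ, z, p_z) = (1 + p_θ, -θ / (1 + p_θ), z, p_z)`
followed by polar coordinates `(r, Θ) ↦ (r cos Θ, r sin Θ)` on the first factor. Polar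
coordinates pull `dy ∧ dx` back to `-r dr ∧ dΘ`, and since `dr = dp_θ` and
`r dΘ = -dθ + (θ / r) dp_θ`, the first map pulls `-r dr ∧ dΘ` back to `dp_θ ∧ dθ`.
-/

open Real

noncomputable section

def polarToCartesian (q : ℝ × ℝ × ℝ × ℝ) : ℝ × ℝ × ℝ × ℝ :=
  (q.1 * cos q.2.1, q.1 * sin q.2.1, q.2.2)

def actionAngle (q : ℝ × ℝ × ℝ × ℝ) : ℝ × ℝ × ℝ × ℝ :=
  (1 + q.2.2.1, -q.1 / (1 + q.2.2.1), q.2.1, q.2.2.2)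

/-- `dy ∧ dx + dy' ∧ dx'` in the coordinates `(x, y, x', y')`. -/
def cartesianForm (u v : ℝ × ℝ × ℝ × ℝ) : ℝ :=
  u.2.1 * v.1 - u.1 * v.2.1 + u.2.2.2 * v.2.2.1 - u.2.2.1 * v.2.2.2

/-- `-r dr ∧ dΘ + dy ∧ dx` at radius `r`, in the coordinates `(r, Θ, x, y)`. -/
def polarForm (r : ℝ) (u v : ℝ × ℝ × ℝ × ℝ) : ℝ :=
  r * (u.2.1 * v.1 - u.1 * v.2.1) + u.2.2.2 * v.2.2.1 - u.2.2.1 * v.2.2.2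

/-- `dp_θ ∧ dθ + dp_z ∧ dz` in the coordinates `(θ, z, p_θ, p_z)`. -/
def canonicalForm (u v : ℝ × ℝ × ℝ × ℝ) : ℝ :=
  u.2.2.1 * v.1 - u.1 * v.2.2.1 + u.2.2.2 * v.2.1 - u.2.1 * v.2.2.2

theorem differentiable_polarToCartesian : Differentiable ℝ polarToCartesian := by
  unfold polarToCartesian
  fun_prop

theorem fderiv_polarToCartesian_apply (q w : ℝ × ℝ × ℝ × ℝ) :
    fderiv ℝ polarToCartesian q w =
      (w.1 * cos q.2.1 - q.1 * sin q.2.1 * w.2.1, w.1 * sin q.2.1 + q.1 * cos q.2.1 * w.2.1,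
        w.2.2) := by
  have hΘ : HasFDerivAt (fun x : ℝ × ℝ × ℝ × ℝ => x.2.1) _ q := (hasFDerivAt_snd (𝕜 := ℝ)).fst
  have h : HasFDerivAt polarToCartesian _ q :=
    (hasFDerivAt_fst.fun_mul hΘ.cos).prodMk
      ((hasFDerivAt_fst.fun_mul hΘ.sin).prodMk hasFDerivAt_snd.snd)
  rw [h.fderiv]
  simp only [ContinuousLinearMap.prod_apply, ContinuousLinearMap.comp_apply, add_apply,
    smul_apply, ContinuousLinearMap.coe_fst', ContinuousLinearMap.coe_snd', smul_eq_mul,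
    Prod.mk.injEq, and_true]
  constructor <;> ring

theorem cartesianForm_fderiv_polarToCartesian (q u v : ℝ × ℝ × ℝ × ℝ) :
    cartesianForm (fderiv ℝ polarToCartesian q u) (fderiv ℝ polarToCartesian q v) =
      polarForm q.1 u v := by
  simp only [fderiv_polarToCartesian_apply, cartesianForm, polarForm]
  linear_combination q.1 * (u.2.1 * v.1 - u.1 * v.2.1) * sin_sq_add_cos_sq q.2.1

theorem differentiableAt_actionAngle {q : ℝ × ℝ × ℝ × ℝ} (hq : 1 + q.2.2.1 ≠ 0) :
    DifferentiableAt ℝ actionAngle q := by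
  unfold actionAngle
  fun_prop (disch := exact hq)

theorem fderiv_actionAngle_apply {q : ℝ × ℝ × ℝ × ℝ} (hq : 1 + q.2.2.1 ≠ 0)
    (w : ℝ × ℝ × ℝ × ℝ) :
    fderiv ℝ actionAngle q w =
      (w.2.2.1, -w.1 / (1 + q.2.2.1) + q.1 * w.2.2.1 / (1 + q.2.2.1) ^ 2, w.2.1, w.2.2.2) := by
  have hsnd : HasFDerivAt (fun x : ℝ × ℝ × ℝ × ℝ => x.2) _ q := hasFDerivAt_snd (𝕜 := ℝ)
  have hr : HasFDerivAt (fun x : ℝ × ℝ × ℝ × ℝ => 1 + x.2.2.1) _ q := hsnd.snd.fst.const_add 1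
  have hΘ : HasFDerivAt (fun x : ℝ × ℝ × ℝ × ℝ => -x.1 / (1 + x.2.2.1)) _ q :=
    hasFDerivAt_fst.fun_neg.fun_mul ((hasDerivAt_inv hq).comp_hasFDerivAt q hr)
  have h : HasFDerivAt actionAngle _ q := hr.prodMk (hΘ.prodMk (hsnd.fst.prodMk hsnd.snd.snd))
  rw [h.fderiv]
  simp only [ContinuousLinearMap.prod_apply, ContinuousLinearMap.comp_apply, add_apply,
    smul_apply, neg_apply, ContinuousLinearMap.coe_fst', ContinuousLinearMap.coe_snd',
    smul_eq_mul, Prod.mk.injEq, and_true, true_and]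
  ring

theorem polarForm_fderiv_actionAngle {q : ℝ × ℝ × ℝ × ℝ} (hq : 1 + q.2.2.1 ≠ 0)
    (u v : ℝ × ℝ × ℝ × ℝ) :
    polarForm (1 + q.2.2.1) (fderiv ℝ actionAngle q u) (fderiv ℝ actionAngle q v) =
      canonicalForm u v := by
  simp only [fderiv_actionAngle_apply hq, polarForm, canonicalForm]
  field_simp
  ring

end

/-- The map `g(θ,z,p_θ,p_z) = (r,Θ,x,y) = (1+p_θ, -θ/(1+p_θ), z, p_z)`,
written in Cartesian coordinates on the target (polar `(r,Θ)` on the first `ℝ²`-factor),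
pulls back the symplectic form `-r dr∧dΘ + dy∧dx` (i.e. the standard form `dy∧dx`
on each Cartesian factor) to `dp_θ∧dθ + dp_z∧dz`. -/
theorem stmt10
    (G : ℝ × ℝ × ℝ × ℝ → ℝ × ℝ × ℝ × ℝ)
    (hG : ∀ p : ℝ × ℝ × ℝ × ℝ,
      G p = ((1 + p.2.2.1) * Real.cos (-p.1 / (1 + p.2.2.1)),
             (1 + p.2.2.1) * Real.sin (-p.1 / (1 + p.2.2.1)),
             p.2.1, p.2.2.2))
    (ωtgt : (ℝ × ℝ × ℝ × ℝ) → (ℝ × ℝ × ℝ × ℝ) → ℝ)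
    (hωtgt : ∀ u v, ωtgt u v = u.2.1 * v.1 - u.1 * v.2.1
      + u.2.2.2 * v.2.2.1 - u.2.2.1 * v.2.2.2)
    (ωsrc : (ℝ × ℝ × ℝ × ℝ) → (ℝ × ℝ × ℝ × ℝ) → ℝ)
    (hωsrc : ∀ u v, ωsrc u v = u.2.2.1 * v.1 - u.1 * v.2.2.1
      + u.2.2.2 * v.2.1 - u.2.1 * v.2.2.2)
    (p : ℝ × ℝ × ℝ × ℝ) (hp : -1 < p.2.2.1 ∧ p.2.2.1 < 1) :
    ∀ u v : ℝ × ℝ × ℝ × ℝ,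
      ωtgt (fderiv ℝ G p u) (fderiv ℝ G p v) = ωsrc u v := by
  have hG_comp : G = polarToCartesian ∘ actionAngle := funext hG
  have hr : 1 + p.2.2.1 ≠ 0 := by linarith [hp.1]
  have hDG : fderiv ℝ G p = (fderiv ℝ polarToCartesian (actionAngle p)).comp
      (fderiv ℝ actionAngle p) := by
    rw [hG_comp]
    exact fderiv_comp p (differentiable_polarToCartesian _) (differentiableAt_actionAngle hr)
  intro u v
  calc ωtgt (fderiv ℝ G p u) (fderiv ℝ G p v)
      = cartesianForm (fderiv ℝ polarToCartesian (actionAngle p) (fderiv ℝ actionAngle p u))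
          (fderiv ℝ polarToCartesian (actionAngle p) (fderiv ℝ actionAngle p v)) := by
        rw [hωtgt, hDG]; rfl
    _ = polarForm (1 + p.2.2.1) (fderiv ℝ actionAngle p u) (fderiv ℝ actionAngle p v) :=
        cartesianForm_fderiv_polarToCartesian _ _ _
    _ = ωsrc u v := by rw [polarForm_fderiv_actionAngle hr, hωsrc]; rfl
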